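/- Let X ~ Γ_λ(α,β) with λ ∈ (0,1), α > 0, β > 0 and α + 2 < 1/λ. Then the variance Var(X) = E[X²] - (E[X])² = (α/β²) · (1-λ) / ((1-λ(α+1))² (1-λ(α+2))). -/

import Mathlib

/-!
Substituting `t = βx` turns the `r`-th moment of `Γ_λ(α, β)` into
`Γ_λ(α + r) / (β^r Γ_λ(α))`. Integrating by parts against `t^s (1 + λt)^{1 - 1/λ}`, whose
derivative is `s t^{s-1}(1+λt)^{-1/λ} + (λ(s+1) - 1) t^s (1+λt)^{-1/λ}` and which vanishes at `0`
and (for `s + 1 < 1/λ`) at `∞`, gives the recursion `Γ_λ(s + 1) = s / (1 - λ(s+1)) · Γ_λ(s)`.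
The first two moments are therefore explicit rational functions, and the variance is algebra.
-/

open MeasureTheory

/-- The degenerate gamma function `Γ_λ(s) = ∫_0^∞ (1+λt)^{-1/λ} t^{s-1} dt`. -/
noncomputable def degGamma (lam s : ℝ) : ℝ :=
  ∫ t in Set.Ioi (0:ℝ), (1 + lam * t) ^ (-1/lam) * t ^ (s - 1)

/-- The probability density function of the degenerate gamma distribution `Γ_λ(α,β)`. -/
noncomputable def degGammaPdf (lam α β x : ℝ) : ℝ :=
  if 0 < x then (1 / degGamma lam α) * β * (1 + lam * β * x) ^ (-1/lam) * (β * x) ^ (α - 1)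
  else 0

open Set Filter Real

noncomputable def degGammaKernel (lam s t : ℝ) : ℝ := (1 + lam * t) ^ (-1 / lam) * t ^ (s - 1)

lemma degGamma_eq_integral_degGammaKernel (lam s : ℝ) :
    degGamma lam s = ∫ t in Ioi 0, degGammaKernel lam s t := rfl

lemma one_sub_mul_pos_of_lt_one_div {lam s : ℝ} (hlam : 0 < lam) (h : s < 1 / lam) :
    0 < 1 - lam * s := by
  rw [lt_div_iff₀ hlam] at h
  linarith

lemma one_add_mul_rpow_le {lam t p : ℝ} (hlam : 0 < lam) (ht : 0 < t) (hp : p ≤ 0) :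
    (1 + lam * t) ^ p ≤ lam ^ p * t ^ p := by
  rw [← mul_rpow hlam.le ht.le]
  exact rpow_le_rpow_of_nonpos (by positivity) (by linarith) hp

lemma degGammaKernel_pos {lam s t : ℝ} (hlam : 0 ≤ lam) (ht : 0 < t) :
    0 < degGammaKernel lam s t := by
  unfold degGammaKernel
  positivity

lemma continuousOn_degGammaKernel {lam s : ℝ} (hlam : 0 ≤ lam) :
    ContinuousOn (degGammaKernel lam s) (Ioi 0) := by
  refine ContinuousOn.mul (ContinuousOn.rpow_const (by fun_prop) fun t ht => ?_)
    (ContinuousOn.rpow_const continuousOn_id fun t ht => Or.inl (ne_of_gt ht))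
  have : (0 : ℝ) < t := ht
  exact Or.inl (by positivity)

lemma integrableOn_degGammaKernel_Ioc {lam s : ℝ} (hlam : 0 ≤ lam) (hs : 0 < s) :
    IntegrableOn (degGammaKernel lam s) (Ioc 0 1) := by
  have hbound : IntegrableOn (fun t : ℝ => t ^ (s - 1)) (Ioc 0 1) := by
    rw [← intervalIntegrable_iff_integrableOn_Ioc_of_le zero_le_one]
    exact intervalIntegral.intervalIntegrable_rpow' (by linarith)
  refine hbound.mono' (((continuousOn_degGammaKernel hlam).mono Ioc_subset_Ioi_self)
    |>.aestronglyMeasurable measurableSet_Ioc) ?_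
  filter_upwards [ae_restrict_mem measurableSet_Ioc] with t ht
  have ht0 : 0 < t := ht.1
  rw [norm_of_nonneg (degGammaKernel_pos hlam ht0).le, degGammaKernel]
  have hle : (1 + lam * t) ^ (-1 / lam) ≤ 1 :=
    rpow_le_one_of_one_le_of_nonpos (by nlinarith)
      (div_nonpos_of_nonpos_of_nonneg (by norm_num) hlam)
  exact mul_le_of_le_one_left (by positivity) hle

lemma integrableOn_degGammaKernel_Ioi_one {lam s : ℝ} (hlam : 0 < lam) (h : s < 1 / lam) :
    IntegrableOn (degGammaKernel lam s) (Ioi 1) := by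
  have hbound : IntegrableOn (fun t : ℝ => lam ^ (-1 / lam) * t ^ (s - 1 - 1 / lam)) (Ioi 1) :=
    (integrableOn_Ioi_rpow_of_lt (by linarith) one_pos).const_mul _
  refine hbound.mono' (((continuousOn_degGammaKernel hlam.le).mono
    (Ioi_subset_Ioi zero_le_one)).aestronglyMeasurable measurableSet_Ioi) ?_
  filter_upwards [ae_restrict_mem measurableSet_Ioi] with t (ht : 1 < t)
  have ht0 : 0 < t := one_pos.trans ht
  rw [norm_of_nonneg (degGammaKernel_pos hlam.le ht0).le, degGammaKernel]
  calc (1 + lam * t) ^ (-1 / lam) * t ^ (s - 1)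
      ≤ lam ^ (-1 / lam) * t ^ (-1 / lam) * t ^ (s - 1) := by
        gcongr
        exact one_add_mul_rpow_le hlam ht0 (div_nonpos_of_nonpos_of_nonneg (by norm_num) hlam.le)
    _ = lam ^ (-1 / lam) * t ^ (s - 1 - 1 / lam) := by
        rw [mul_assoc, ← rpow_add ht0]
        ring_nf

lemma integrableOn_degGammaKernel {lam s : ℝ} (hlam : 0 < lam) (hs : 0 < s) (h : s < 1 / lam) :
    IntegrableOn (degGammaKernel lam s) (Ioi 0) := by
  rw [← Ioc_union_Ioi_eq_Ioi zero_le_one]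
  exact (integrableOn_degGammaKernel_Ioc hlam.le hs).union
    (integrableOn_degGammaKernel_Ioi_one hlam h)

lemma degGamma_pos {lam s : ℝ} (hlam : 0 < lam) (hs : 0 < s) (h : s < 1 / lam) :
    0 < degGamma lam s := by
  rw [degGamma_eq_integral_degGammaKernel]
  have hpos : ∀ t ∈ Ioi (0 : ℝ), 0 < degGammaKernel lam s t := fun t ht =>
    degGammaKernel_pos hlam.le ht
  rw [setIntegral_pos_iff_support_of_nonneg_ae
      (ae_restrict_of_forall_mem measurableSet_Ioi fun t ht => (hpos t ht).le)
      (integrableOn_degGammaKernel hlam hs h),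
    inter_eq_right.mpr fun t ht => Function.mem_support.mpr (hpos t ht).ne']
  simp

lemma tendsto_rpow_mul_one_add_mul_rpow_atTop {lam s : ℝ} (hlam : 0 < lam) (hs : 0 ≤ s)
    (h : s + 1 < 1 / lam) :
    Tendsto (fun t : ℝ => t ^ s * (1 + lam * t) ^ (1 - 1 / lam)) atTop (nhds 0) := by
  have hexp : 1 - 1 / lam ≤ 0 := by
    linarith
  have hbound : Tendsto (fun t : ℝ => lam ^ (1 - 1 / lam) * t ^ (s + (1 - 1 / lam))) atTop
      (nhds 0) := by
    simpa using (tendsto_rpow_neg_atTop (y := -(s + (1 - 1 / lam))) (by linarith)).const_mul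
      (lam ^ (1 - 1 / lam))
  refine squeeze_zero' ?_ ?_ hbound
  · filter_upwards [eventually_gt_atTop 0] with t ht
    positivity
  · filter_upwards [eventually_gt_atTop 0] with t ht
    calc t ^ s * (1 + lam * t) ^ (1 - 1 / lam)
        ≤ t ^ s * (lam ^ (1 - 1 / lam) * t ^ (1 - 1 / lam)) := by
          gcongr
          exact one_add_mul_rpow_le hlam ht hexp
      _ = lam ^ (1 - 1 / lam) * t ^ (s + (1 - 1 / lam)) := by
          rw [rpow_add ht]
          ring

lemma hasDerivAt_rpow_mul_one_add_mul_rpow {lam s t : ℝ} (hlam : 0 < lam) (ht : 0 < t) :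
    HasDerivAt (fun t : ℝ => t ^ s * (1 + lam * t) ^ (1 - 1 / lam))
      (s * degGammaKernel lam s t + (lam * (s + 1) - 1) * degGammaKernel lam (s + 1) t) t := by
  have hb : 0 < 1 + lam * t := by positivity
  have hpow : HasDerivAt (fun t : ℝ => t ^ s) (s * t ^ (s - 1)) t :=
    hasDerivAt_rpow_const (Or.inl ht.ne')
  have hbase : HasDerivAt (fun t : ℝ => 1 + lam * t) lam t := by
    simpa using ((hasDerivAt_id t).const_mul lam).const_add 1
  refine (hpow.mul (hbase.rpow_const (p := 1 - 1 / lam) (Or.inl hb.ne'))).congr_deriv ?_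
  have ht' : t ^ s = t ^ (s - 1) * t := by
    rw [← rpow_add_one ht.ne']; ring_nf
  have hb' : (1 + lam * t) ^ (1 - 1 / lam) = (1 + lam * t) ^ (-1 / lam) * (1 + lam * t) := by
    rw [← rpow_add_one hb.ne']; ring_nf
  simp only [degGammaKernel, add_sub_cancel_right, sub_sub_cancel_left, ht', hb']
  field_simp
  ring

lemma degGamma_add_one {lam s : ℝ} (hlam : 0 < lam) (hs : 0 < s) (h : s + 1 < 1 / lam) :
    degGamma lam (s + 1) = s / (1 - lam * (s + 1)) * degGamma lam s := by
  have hint : IntegrableOn (degGammaKernel lam s) (Ioi 0) :=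
    integrableOn_degGammaKernel hlam hs (by linarith)
  have hint' : IntegrableOn (degGammaKernel lam (s + 1)) (Ioi 0) :=
    integrableOn_degGammaKernel hlam (by linarith) h
  have hcont :
      ContinuousWithinAt (fun t : ℝ => t ^ s * (1 + lam * t) ^ (1 - 1 / lam)) (Ici 0) 0 :=
    ((continuousAt_rpow_const 0 s (Or.inr hs.le)).mul
      ((by fun_prop : ContinuousAt (fun t : ℝ => 1 + lam * t) 0).rpow_const
        (Or.inl (by simp)))).continuousWithinAt
  have hparts := integral_Ioi_of_hasDerivAt_of_tendsto hcont
    (fun t ht => hasDerivAt_rpow_mul_one_add_mul_rpow hlam ht)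
    ((hint.const_mul s).add (hint'.const_mul _))
    (tendsto_rpow_mul_one_add_mul_rpow_atTop hlam hs.le h)
  rw [integral_add (hint.const_mul s) (hint'.const_mul _), integral_const_mul, integral_const_mul,
    ← degGamma_eq_integral_degGammaKernel, ← degGamma_eq_integral_degGammaKernel,
    zero_rpow hs.ne', zero_mul, sub_zero] at hparts
  have hden := one_sub_mul_pos_of_lt_one_div hlam h
  rw [div_mul_eq_mul_div, eq_div_iff hden.ne']
  linarith

lemma integral_rpow_mul_degGammaPdf {β : ℝ} (lam α r : ℝ) (hβ : 0 < β) :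
    ∫ x : ℝ, x ^ r * degGammaPdf lam α β x
      = degGamma lam (α + r) / (β ^ r * degGamma lam α) := by
  have hzero : ∀ x ∉ Ioi (0 : ℝ), x ^ r * degGammaPdf lam α β x = 0 := fun x hx => by
    simp only [degGammaPdf, if_neg (show ¬0 < x from hx), mul_zero]
  have hsubst : ∀ x ∈ Ioi (0 : ℝ), x ^ r * degGammaPdf lam α β x
      = (β ^ r * degGamma lam α)⁻¹ * (β * degGammaKernel lam (α + r) (β * x)) := by
    intro x hx
    have hx : 0 < x := hx
    rw [degGammaPdf, if_pos hx, degGammaKernel, show α + r - 1 = (α - 1) + r by ring,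
      rpow_add (by positivity), mul_rpow (z := r) hβ.le hx.le]
    have : β ^ r ≠ 0 := (rpow_pos_of_pos hβ r).ne'
    field_simp
  rw [← setIntegral_eq_integral_of_forall_compl_eq_zero hzero,
    setIntegral_congr_fun measurableSet_Ioi hsubst, integral_const_mul, integral_const_mul,
    integral_comp_mul_left_Ioi (degGammaKernel lam (α + r)) 0 hβ, mul_zero, smul_eq_mul,
    ← degGamma_eq_integral_degGammaKernel]
  field_simp

lemma integral_mul_degGammaPdf {lam α β : ℝ} (hlam : 0 < lam) (hα : 0 < α) (hβ : 0 < β)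
    (h : α + 1 < 1 / lam) :
    ∫ x : ℝ, x * degGammaPdf lam α β x = α / (β * (1 - lam * (α + 1))) := by
  have hΓ := degGamma_pos hlam hα (by linarith)
  have hden := one_sub_mul_pos_of_lt_one_div hlam h
  have hmoment := integral_rpow_mul_degGammaPdf lam α 1 hβ
  simp only [rpow_one] at hmoment
  rw [hmoment, degGamma_add_one hlam hα h]
  field_simp

lemma integral_sq_mul_degGammaPdf {lam α β : ℝ} (hlam : 0 < lam) (hα : 0 < α) (hβ : 0 < β)
    (h : α + 2 < 1 / lam) :
    ∫ x : ℝ, x ^ 2 * degGammaPdf lam α β x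
      = α * (α + 1) / (β ^ 2 * ((1 - lam * (α + 1)) * (1 - lam * (α + 2)))) := by
  have hΓ := degGamma_pos hlam hα (by linarith)
  have hden₁ := one_sub_mul_pos_of_lt_one_div hlam (show α + 1 < 1 / lam by linarith)
  have hden₂ := one_sub_mul_pos_of_lt_one_div hlam h
  have hΓ₂ : degGamma lam (α + 2)
      = (α + 1) / (1 - lam * (α + 2)) * (α / (1 - lam * (α + 1)) * degGamma lam α) := by
    rw [show α + 2 = α + 1 + 1 by ring, degGamma_add_one hlam (by linarith) (by linarith),
      degGamma_add_one hlam hα (by linarith)]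
  have hmoment := integral_rpow_mul_degGammaPdf lam α 2 hβ
  norm_cast at hmoment
  rw [hmoment, hΓ₂]
  field_simp

theorem degGamma_variance (lam α β : ℝ) (hlam : lam ∈ Set.Ioo (0:ℝ) 1)
    (hα : 0 < α) (hβ : 0 < β) (h : α + 2 < 1 / lam) :
    (∫ x : ℝ, x ^ 2 * degGammaPdf lam α β x) - (∫ x : ℝ, x * degGammaPdf lam α β x) ^ 2 =
      (α / β ^ 2) * ((1 - lam) / ((1 - lam * (α + 1)) ^ 2 * (1 - lam * (α + 2)))) := by
  have hlam₀ : 0 < lam := hlam.1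
  have h₁ : α + 1 < 1 / lam := by linarith
  have hden₁ := one_sub_mul_pos_of_lt_one_div hlam₀ h₁
  have hden₂ := one_sub_mul_pos_of_lt_one_div hlam₀ h
  rw [integral_sq_mul_degGammaPdf hlam₀ hα hβ h, integral_mul_degGammaPdf hlam₀ hα hβ h₁]
  field_simp
  ring
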